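/- arXiv:0902.0440 — 3 statements merged into one kernel-verified Lean document; each statement's English description precedes it below -/
import Mathlib

section
/- Assume λ = λ^{<λ} < cf(θ), χ ≤ 2^λ, and χ → [θ]²_{2κ,2}. Then for every ordinal γ < λ⁺, χ → (γ)²_κ holds, i.e. every coloring c : [χ]² → κ has a homogeneous set of order type γ. -/
open Cardinal

/-- `λ → (ξ;ξ)²_κ`: for every coloring `c` of pairs of ordinals below `λ` into `κ`
there are `ε < κ` and sequences `⟨α_i, β_i : i < ξ⟩` with `α_i < β_i < α_j < λ` for
`i < j` and `c{α_i, β_j} = ε` for `i ≤ j`. -/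
def ArrowSq (l : Cardinal) (ξ : Ordinal) (κ : Cardinal) : Prop :=
  ∀ c : Ordinal → Ordinal → Ordinal,
    (∀ α β : Ordinal, α < l.ord → β < l.ord → c α β < κ.ord) →
    ∃ ε : Ordinal, ε < κ.ord ∧ ∃ a b : Ordinal → Ordinal,
      (∀ i, i < ξ → a i < b i ∧ b i < l.ord) ∧
      (∀ i j, i < j → j < ξ → b i < a j) ∧
      (∀ i j, i ≤ j → j < ξ → c (a i) (b j) = ε)

/-- `λ → (ξ,(ξ;ξ)_κ)²`: for every coloring of pairs below `λ` into `1+κ` there are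
`ε < 1+κ` and `α_i < β_i < α_j < λ` (for `i < j < ξ`) such that either `ε = 0` and
`c{α_i,α_j} = 0` for `i < j`, or `ε ≥ 1` and `c{α_i,β_j} = ε` for `i ≤ j`. -/
def ArrowMixed (l : Cardinal) (ξ : Ordinal) (κ : Cardinal) : Prop :=
  ∀ c : Ordinal → Ordinal → Ordinal,
    (∀ α β : Ordinal, α < l.ord → β < l.ord → c α β < 1 + κ.ord) →
    ∃ ε : Ordinal, ε < 1 + κ.ord ∧ ∃ a b : Ordinal → Ordinal,
      (∀ i, i < ξ → a i < b i ∧ b i < l.ord) ∧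
      (∀ i j, i < j → j < ξ → b i < a j) ∧
      ((ε = 0 ∧ ∀ i j, i < j → j < ξ → c (a i) (a j) = 0) ∨
       (1 ≤ ε ∧ ∀ i j, i ≤ j → j < ξ → c (a i) (b j) = ε))

/-- `χ → [θ]²_{σ,2}`: every coloring of pairs below `χ` into `σ` admits a subset of
`χ` of order type `θ` (given by a strictly increasing enumeration) on which the
coloring takes at most two values. -/
def SqBr (χ θ σ : Cardinal) : Prop :=
  ∀ d : Ordinal → Ordinal → Ordinal,
    (∀ α β : Ordinal, α < χ.ord → β < χ.ord → d α β < σ.ord) →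
    ∃ f : Ordinal → Ordinal,
      (∀ i, i < θ.ord → f i < χ.ord) ∧
      (∀ i j, i < j → j < θ.ord → f i < f j) ∧
      ∃ v₁ v₂ : Ordinal, ∀ i j, i < j → j < θ.ord →
        d (f i) (f j) = v₁ ∨ d (f i) (f j) = v₂

/-!
Code the ordinals below `χ ≤ 2^λ` by distinct branches `E α ∈ 2^λ` and refine `c` to the
`2κ`-colouring `2 · c{α, β} + [E α <_lex E β]`. The square-bracket relation gives a `θ`-sequence on
which this colouring takes at most two values. As `λ^{<λ} = λ < cf θ`, no `θ`-sequence of branches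
is lexicographically monotone: otherwise two consecutive pairs `(i, i + 1)`, `(j, j + 1)` with
`i + 1 < j` would split at the same level along the same initial segment, and then `(i + 1, j)`
splits the wrong way. So the two values are one odd and one even, and all lexicographically
decreasing pairs of the sequence share one `c`-colour.

It remains to find a lexicographically decreasing subsequence of type `γ` among any `λ⁺` distinct
branches, by induction on `γ < λ⁺`. After pruning the small cones of the tree, some branch `b` has
unboundedly many levels `δ` with `b δ = 0` whose cone above `b ↾ δ ⁀ 1` is still large; sequences
chosen in these cones for increasing `δ`, each above the previous ones, are lexicographically
decreasing across cones and concatenate to type `γ + 1`, or, along `λ` cones, to a limit `γ`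
(as `|γ| ≤ λ`). For finite `λ` the hypothesis forces `λ ≤ 2`, hence `γ ≤ 2`.
-/

open Set Order

noncomputable section

universe u v

namespace Cardinal

variable {l : Cardinal.{u}}

theorem two_power_le_of_powerlt_eq (hl0 : ℵ₀ ≤ l) (hpl : l ^< l = l) {μ : Cardinal}
    (hμ : μ < l) : 2 ^ μ ≤ l :=
  calc 2 ^ μ ≤ l ^ μ := power_le_power_right (natCast_lt_aleph0.le.trans hl0)
    _ ≤ l ^< l := le_powerlt l hμ
    _ = l := hpl

theorem cof_ord_eq_of_powerlt_eq (hl0 : ℵ₀ ≤ l) (hpl : l ^< l = l) : l.ord.cof = l := by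
  refine (Ordinal.cof_ord_le l).antisymm (not_lt.1 fun hcof => ?_)
  exact (lt_power_cof_ord hl0).not_ge ((le_powerlt l hcof).trans_eq hpl)

theorem le_two_of_powerlt_eq (hfin : l < ℵ₀) (hpl : l ^< l = l) : l ≤ 2 := by
  by_contra! h
  obtain ⟨n, rfl⟩ := lt_aleph0.1 hfin
  have h2 : 2 < n := by exact_mod_cast h
  have : (n : Cardinal) ^ (2 : Cardinal) ≤ n := (le_powerlt _ h).trans_eq hpl
  have : n ^ 2 ≤ n := by exact_mod_cast this
  nlinarith

theorem two_mul_ord_le (κ : Cardinal.{u}) : 2 * κ.ord ≤ (2 * κ).ord := by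
  rcases lt_or_ge κ ℵ₀ with hκ | hκ
  · obtain ⟨n, rfl⟩ := lt_aleph0.1 hκ
    have : (2 * n : Cardinal) = ((2 * n : ℕ) : Cardinal) := by push_cast; rfl
    rw [this, ord_natCast, ord_natCast]
    push_cast
    rfl
  · rw [mul_comm (2 : Cardinal), mul_eq_left hκ ((ofNat_lt_aleph0 (n := 2)).le.trans hκ)
      two_ne_zero]
    obtain ⟨q, hq⟩ :=
      Ordinal.isSuccPrelimit_iff_omega0_dvd.1 (isSuccLimit_ord hκ).isSuccPrelimit
    rw [hq, ← mul_assoc, Ordinal.mul_omega0 two_pos (Ordinal.natCast_lt_omega0 2)]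

theorem ord_succ_le_of_lt_cof {o : Ordinal} (h : l < o.cof) : (succ l).ord ≤ o :=
  (ord_le_ord.2 (succ_le_of_lt h)).trans (Ordinal.ord_cof_le o)

end Cardinal

namespace Ordinal

theorem two_mul_add_toNat_inj {a a' : Ordinal} {b b' : Bool}
    (h : 2 * a + (b.toNat : Ordinal) = 2 * a' + (b'.toNat : Ordinal)) : a = a' ∧ b = b' := by
  have hlt : ∀ b : Bool, (b.toNat : Ordinal) < 2 := fun b => by cases b <;> simp
  have hdiv : ∀ (a : Ordinal) (b : Bool), (2 * a + (b.toNat : Ordinal)) / 2 = a := fun a b => by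
    rw [mul_add_div a two_ne_zero, div_eq_zero_of_lt (hlt b), add_zero]
  have hmod : ∀ (a : Ordinal) (b : Bool), (2 * a + (b.toNat : Ordinal)) % 2 = b.toNat :=
    fun a b => by rw [mul_add_mod_self, mod_eq_of_lt (hlt b)]
  have hbit := (hmod a b).symm.trans ((congrArg (· % 2) h).trans (hmod a' b'))
  refine ⟨by rw [← hdiv a b, h, hdiv], ?_⟩
  cases b <;> cases b' <;> simp_all

theorem iSup_Iio_lt {m P : Ordinal.{u}} (hm : m.card < P.cof) {f : Ordinal.{u} → Ordinal.{u}}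
    (hf : ∀ i < m, f i < P) : ⨆ i : Iio m, f i < P := by
  refine lift_iSup_lt_of_lt_cof ?_ fun i => hf i i.2
  rwa [Cardinal.mk_Iio_ordinal, Cardinal.lift_lift, ← lift_cof, Cardinal.lift_lt]

theorem le_iSup_Iio {m i : Ordinal.{u}} (f : Ordinal.{u} → Ordinal.{u}) (hi : i < m) :
    f i ≤ ⨆ j : Iio m, f j :=
  Ordinal.le_iSup (fun j : Iio m => f j) ⟨i, hi⟩

theorem exists_strictMono_mem {o : Ordinal.{u}} (ho : IsSuccLimit o) {D : Set Ordinal}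
    (hDo : D ⊆ Iio o) (hD : ∀ β < o, ∃ δ ∈ D, β ≤ δ) :
    ∃ δ : Ordinal → Ordinal, StrictMono δ ∧ ∀ m, m.card < o.cof → δ m ∈ D := by
  have hS : ¬ BddAbove (D ∪ Ici o) := not_bddAbove_iff.2 fun a =>
    ⟨max a o + 1, Or.inr ((le_max_right a o).trans (lt_add_one _).le),
      (le_max_left a o).trans_lt (lt_add_one _)⟩
  refine ⟨enumOrd (D ∪ Ici o), enumOrd_strictMono hS, fun m hm => ?_⟩
  suffices enumOrd (D ∪ Ici o) m < o from (enumOrd_mem hS m).resolve_right this.not_ge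
  induction m using WellFoundedLT.induction with | _ m ih => ?_
  have hsup : ⨆ b : Iio m, enumOrd (D ∪ Ici o) b + 1 < o :=
    iSup_Iio_lt hm fun b hb => ho.add_one_lt (ih b hb ((card_le_card hb.le).trans_lt hm))
  obtain ⟨a, haD, hsupa⟩ := hD _ hsup
  refine (enumOrd_le_of_forall_lt (Or.inl haD) fun b hb => ?_).trans_lt (hDo haD)
  exact (lt_add_one _).trans_le ((le_iSup_Iio (fun b => enumOrd _ b + 1) hb).trans hsupa)

theorem exists_surjOn_Iio {γ : Ordinal.{u}} {c : Cardinal.{u}} (hγ : γ.card ≤ c) (hγ0 : 0 < γ) :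
    ∃ s : Ordinal → Ordinal, MapsTo s (Iio c.ord) (Iio γ) ∧ SurjOn s (Iio c.ord) (Iio γ) := by
  have : #(Iio γ) ≤ #(Iio c.ord) := by
    rwa [Cardinal.mk_Iio_ordinal, Cardinal.mk_Iio_ordinal, Cardinal.card_ord, Cardinal.lift_le]
  obtain ⟨e⟩ := this
  have : Nonempty (Iio γ) := ⟨⟨0, hγ0⟩⟩
  refine ⟨fun m => if h : m < c.ord then (Function.invFun e ⟨m, h⟩ : Iio γ).1 else 0,
    fun m hm => ?_, fun k hk => ?_⟩
  · simp only [dif_pos (mem_Iio.1 hm)]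
    exact (Function.invFun e _).2
  · obtain ⟨m, hm⟩ := Function.invFun_surjective e.injective ⟨k, hk⟩
    exact ⟨m, m.2, by simp only [dif_pos m.2.out, hm]⟩

def IsRelSeq (R : Ordinal.{u} → Ordinal.{u} → Prop) (Z : Set Ordinal) (γ : Ordinal)
    (g : Ordinal → Ordinal) : Prop :=
  MapsTo g (Iio γ) Z ∧ ∀ ⦃k k'⦄, k < k' → k' < γ → g k < g k' ∧ R (g k) (g k')

def supRec (U : Ordinal.{u} → Ordinal.{u} → Ordinal.{u}) (m : Ordinal.{u}) : Ordinal.{u} :=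
  ⨆ m' : Iio m, U m' (supRec U m')
termination_by m
decreasing_by exact m'.2

theorem le_supRec (U : Ordinal.{u} → Ordinal.{u} → Ordinal.{u}) {m' m : Ordinal} (h : m' < m) :
    U m' (supRec U m') ≤ supRec U m := by
  rw [supRec.eq_1 U m]
  exact le_iSup_Iio (fun m' => U m' (supRec U m')) h

theorem card_lt_cof_of_lt_ord {c : Cardinal.{u}} (hc : c.IsRegular) {m : Ordinal.{u}}
    (hm : m < c.ord) : m.card < c.ord.cof :=
  hc.cof_ord.symm ▸ Cardinal.lt_ord.1 hm

theorem supRec_lt {c : Cardinal.{u}} (hc : c.IsRegular) {μ : Ordinal} (hμ : μ ≤ c.ord)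
    {U : Ordinal.{u} → Ordinal.{u} → Ordinal.{u}} (hU : ∀ m < μ, ∀ β < c.ord, U m β < c.ord) :
    ∀ m < μ, supRec U m < c.ord := by
  intro m
  induction m using WellFoundedLT.induction with | _ m ih => ?_
  intro hm
  rw [supRec.eq_1]
  exact iSup_Iio_lt (f := fun m' => U m' (supRec U m')) (card_lt_cof_of_lt_ord hc (hm.trans_le hμ))
    fun m' hm' => hU m' (hm'.trans hm) _ (ih m' hm' (hm'.trans hm))

theorem exists_monotone_cover {μ γ : Ordinal.{u}} {q : Ordinal → Ordinal}
    (hcover : ∀ k < γ, ∃ m < μ, k < q m) :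
    ∃ ι : Ordinal → Ordinal, (∀ k < γ, ι k < μ ∧ k < q (ι k)) ∧
      ∀ ⦃k k'⦄, k ≤ k' → k' < γ → ι k ≤ ι k' := by
  refine ⟨fun k => sInf {m | m < μ ∧ k < q m}, fun k hk => csInf_mem (hcover k hk),
    fun k k' hkk' hk' => csInf_le' ?_⟩
  obtain ⟨hμ, hq⟩ := csInf_mem (hcover k' hk')
  exact ⟨hμ, hkk'.trans_lt hq⟩

theorem exists_isRelSeq_of_blocks {R : Ordinal.{u} → Ordinal.{u} → Prop} {c : Cardinal.{u}}
    (hc : c.IsRegular) {Z : Set Ordinal} (hZ : Z ⊆ Iio c.ord) {μ γ : Ordinal} (hμ : μ ≤ c.ord)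
    {N : Ordinal → Set Ordinal} {q : Ordinal → Ordinal} (hNZ : ∀ m < μ, N m ⊆ Z)
    (hq : ∀ m < μ, q m < c.ord) (hcover : ∀ k < γ, ∃ m < μ, k < q m)
    (hcross : ∀ m m', m < m' → m' < μ → ∀ j ∈ N m, ∀ j' ∈ N m', R j j')
    (hblock : ∀ m < μ, ∀ β < c.ord, ∃ g, IsRelSeq R (N m ∩ Ici β) (q m) g) :
    ∃ g, IsRelSeq R Z γ g := by
  choose! G hG using hblock
  set U : Ordinal → Ordinal → Ordinal := fun m β => ⨆ k : Iio (q m), G m β k + 1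
  have hGU : ∀ m β k, k < q m → G m β k < U m β := fun m β k hk =>
    (lt_add_one _).trans_le (le_iSup_Iio (fun k => G m β k + 1) hk)
  have hs : ∀ m < μ, supRec U m < c.ord := supRec_lt hc hμ fun m hm β hβ =>
    iSup_Iio_lt (f := fun k => G m β k + 1) (card_lt_cof_of_lt_ord hc (hq m hm)) fun k hk =>
      (Cardinal.isSuccLimit_ord hc.aleph0_le).add_one_lt (hZ (hNZ m hm ((hG m hm β hβ).1 hk).1))
  -- Block `m` starts at `supRec U m`, above all earlier blocks, and supplies the indices whose
  -- least covering block is `m`.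
  obtain ⟨ι, hι, hιmono⟩ := exists_monotone_cover hcover
  have hg : ∀ k < γ, G (ι k) (supRec U (ι k)) k ∈ N (ι k) ∩ Ici (supRec U (ι k)) :=
    fun k hk => (hG _ (hι k hk).1 _ (hs _ (hι k hk).1)).1 (hι k hk).2
  refine ⟨fun k => G (ι k) (supRec U (ι k)) k, fun k hk => hNZ _ (hι k hk).1 (hg k hk).1,
    fun k k' hkk' hk' => ?_⟩
  rcases (hιmono hkk'.le hk').lt_or_eq with hlt | heq
  · refine ⟨(hGU _ _ k (hι k (hkk'.trans hk')).2).trans_le ?_, hcross _ _ hlt (hι k' hk').1 _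
      (hg k (hkk'.trans hk')).1 _ (hg k' hk').1⟩
    exact (le_supRec U hlt).trans (hg k' hk').2
  · simp only [heq]
    exact (hG _ (hι k' hk').1 _ (hs _ (hι k' hk').1)).2 hkk' (hι k' hk').2

end Ordinal

namespace LexBranch

variable {l : Cardinal.{u}}

def Large (l : Cardinal.{u}) (A : Set Ordinal.{u}) : Prop :=
  lift.{u + 1} l < #A

theorem Large.mono {A B : Set Ordinal} (hA : Large l A) (h : A ⊆ B) : Large l B :=
  hA.trans_le (mk_le_mk_of_subset h)

theorem Large.nonempty {A : Set Ordinal} (hA : Large l A) : A.Nonempty :=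
  nonempty_coe_sort.1 (mk_ne_zero_iff.1 (pos_of_gt hA).ne')

theorem Large.nontrivial (hl0 : ℵ₀ ≤ l) {A : Set Ordinal} (hA : Large l A) : A.Nontrivial := by
  rw [← Set.nontrivial_coe_sort, ← one_lt_iff_nontrivial]
  exact (one_le_aleph0.trans (aleph0_le_lift.2 hl0)).trans_lt hA

theorem Large.of_subset_union (hl0 : ℵ₀ ≤ l) {Z A B : Set Ordinal} (hZ : Large l Z)
    (h : Z ⊆ A ∪ B) : Large l A ∨ Large l B := by
  by_contra! hAB
  refine (hZ.trans_le ((mk_le_mk_of_subset h).trans (mk_union_le A B))).not_ge ?_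
  calc #A + #B ≤ lift.{u + 1} l + lift.{u + 1} l := add_le_add (not_lt.1 hAB.1) (not_lt.1 hAB.2)
    _ = lift.{u + 1} l := add_eq_self (aleph0_le_lift.2 hl0)

theorem Large.inter_Ici (hl0 : ℵ₀ ≤ l) {A : Set Ordinal} (hA : Large l A) {β : Ordinal}
    (hβ : β < (succ l).ord) : Large l (A ∩ Ici β) := by
  refine (hA.of_subset_union hl0 (A := A ∩ Iio β) fun j hj => ?_).resolve_left fun h => ?_
  · rcases lt_or_ge j β with h | h
    exacts [Or.inl ⟨hj, h⟩, Or.inr ⟨hj, h⟩]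
  · refine h.not_ge ((mk_le_mk_of_subset inter_subset_right).trans ?_)
    rw [Cardinal.mk_Iio_ordinal, lift_le, ← lt_succ_iff, ← lt_ord]
    exact hβ

theorem exists_large_fiber (hl0 : ℵ₀ ≤ l) {S : Set Ordinal} (hS : Large l S) {α : Type (u + 1)}
    {T : Set α} (hT : #T ≤ lift.{u + 1} l) (v : Ordinal → α) (hv : MapsTo v S T) :
    ∃ x, Large l {i ∈ S | v i = x} := by
  by_contra! h
  have hcover : S ⊆ ⋃ x : T, {i ∈ S | v i = x} := fun i hi =>
    mem_iUnion.2 ⟨⟨v i, hv hi⟩, hi, rfl⟩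
  refine hS.not_ge ((mk_le_mk_of_subset hcover).trans (mk_iUnion_le _) |>.trans ?_)
  calc #T * ⨆ x : T, #{i ∈ S | v i = x} ≤ lift.{u + 1} l * lift.{u + 1} l :=
        mul_le_mul' hT (ciSup_le' fun x => not_lt.1 (h x))
    _ = lift.{u + 1} l := mul_eq_self (aleph0_le_lift.2 hl0)

theorem exists_cofinal_fiber {Λ : Ordinal.{u}} (hΛ : l < Λ.cof) {α : Type (u + 1)} {T : Set α}
    (hT : #T ≤ lift.{u + 1} l) (v : Ordinal → α) (hv : MapsTo v (Iio Λ) T) :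
    ∃ x, ∀ β < Λ, ∃ i, β ≤ i ∧ i < Λ ∧ v i = x := by
  by_contra! h
  choose b hbΛ hb using fun x : T => h x
  have hsup : ⨆ x, b x < Λ := by
    refine Ordinal.lift_iSup_lt_of_lt_cof ?_ hbΛ
    rw [Cardinal.lift_id'.{u, u + 1}, ← Ordinal.lift_cof]
    exact hT.trans_lt (lift_lt.2 hΛ)
  exact hb ⟨_, hv hsup⟩ _ (le_ciSup ⟨Λ, forall_mem_range.2 fun x => (hbΛ x).le⟩ _) hsup rfl

/-- `(β, u)` codes the restriction of a branch to `β + 1`, with `u` vanishing above `β`. -/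
def restrictions (l : Cardinal.{u}) : Set (Ordinal.{u} × (Ordinal.{u} → Bool)) :=
  {p | p.1 < l.ord ∧ ∀ ξ, p.1 < ξ → p.2 ξ = false}

def restrictionCode (β : Ordinal) (u : Ordinal → Bool) : Ordinal × (Ordinal → Bool) :=
  (β, fun ξ => if ξ ≤ β then u ξ else false)

theorem restrictionCode_mem {β : Ordinal} (hβ : β < l.ord) (u : Ordinal → Bool) :
    restrictionCode β u ∈ restrictions l :=
  ⟨hβ, fun _ hξ => if_neg (not_le.2 hξ)⟩

theorem eq_of_restrictionCode_eq {β β' : Ordinal} {u v : Ordinal → Bool}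
    (h : restrictionCode β u = restrictionCode β' v) : β = β' ∧ ∀ ξ ≤ β, u ξ = v ξ := by
  simp only [restrictionCode, Prod.mk.injEq] at h
  obtain ⟨rfl, h⟩ := h
  exact ⟨rfl, fun ξ hξ => by simpa [hξ] using congrFun h ξ⟩

theorem mk_restrictions_le (hl0 : ℵ₀ ≤ l) (hpl : l ^< l = l) :
    #(restrictions l) ≤ lift.{u + 1} l := by
  let A : Iio l.ord → Set (Ordinal × (Ordinal → Bool)) := fun β =>
    {p | p.1 = β ∧ ∀ ξ, p.1 < ξ → p.2 ξ = false}
  have hA : ∀ β, #(A β) ≤ lift.{u + 1} l := by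
    intro β
    have hinj : Function.Injective fun (p : A β) (ξ : Iio (succ β.1)) => p.1.2 ξ := by
      rintro ⟨⟨β₁, u₁⟩, hβ₁, hu₁⟩ ⟨⟨β₂, u₂⟩, hβ₂, hu₂⟩ h
      simp only at hβ₁ hβ₂ hu₁ hu₂
      subst hβ₁ hβ₂
      refine Subtype.ext (Prod.ext rfl (funext fun ξ => ?_))
      rcases le_or_gt ξ β with hξ | hξ
      · exact congrFun h ⟨ξ, lt_succ_iff.2 hξ⟩
      · exact (hu₁ ξ hξ).trans (hu₂ ξ hξ).symm
    refine (mk_le_of_injective hinj).trans ?_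
    simp only [Cardinal.mk_arrow, mk_bool, Cardinal.mk_Iio_ordinal, lift_lift, lift_ofNat]
    rw [← Cardinal.lift_two.{u + 1, u}, ← lift_power, lift_le]
    exact two_power_le_of_powerlt_eq hl0 hpl (lt_ord.1 ((isSuccLimit_ord hl0).succ_lt β.2))
  have hsub : restrictions l ⊆ ⋃ β, A β := fun p hp => mem_iUnion.2 ⟨⟨p.1, hp.1⟩, rfl, hp.2⟩
  refine (mk_le_mk_of_subset hsub).trans ((mk_iUnion_le A).trans ?_)
  rw [Cardinal.mk_Iio_ordinal, card_ord]
  calc lift.{u + 1} l * ⨆ β, #(A β) ≤ lift.{u + 1} l * lift.{u + 1} l := by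
        gcongr
        exact ciSup_le' hA
    _ = lift.{u + 1} l := mul_eq_self (aleph0_le_lift.2 hl0)

variable {y : Ordinal.{u} → Ordinal.{u} → Bool}

theorem exists_large_agreeing (hl0 : ℵ₀ ≤ l) (hpl : l ^< l = l) {S : Set Ordinal}
    (hS : Large l S) {β : Ordinal → Ordinal} (hβ : ∀ i ∈ S, β i < l.ord) :
    ∃ W ⊆ S, Large l W ∧ ∀ i ∈ W, ∀ j ∈ W, β i = β j ∧ ∀ ξ ≤ β i, y i ξ = y j ξ := by
  obtain ⟨x, hx⟩ := exists_large_fiber hl0 hS (mk_restrictions_le hl0 hpl)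
    (fun i => restrictionCode (β i) (y i)) fun i hi => restrictionCode_mem (hβ i hi) _
  exact ⟨_, sep_subset _ _, hx, fun i hi j hj => eq_of_restrictionCode_eq (hi.2.trans hj.2.symm)⟩

theorem exists_agreeing_of_lt_cof (hl0 : ℵ₀ ≤ l) (hpl : l ^< l = l) {Λ : Ordinal}
    (hΛ : l < Λ.cof) {β : Ordinal → Ordinal} (hβ : ∀ i < Λ, β i < l.ord) :
    ∃ i j, i + 1 < j ∧ j < Λ ∧ β i = β j ∧ ∀ ξ ≤ β i, y i ξ = y j ξ := by
  have hlim : IsSuccLimit Λ := Ordinal.one_lt_cof_iff.1 ((one_lt_aleph0.trans_le hl0).trans hΛ)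
  obtain ⟨x, hx⟩ := exists_cofinal_fiber hΛ (mk_restrictions_le hl0 hpl)
    (fun i => restrictionCode (β i) (y i)) fun i hi => restrictionCode_mem (hβ i hi) _
  obtain ⟨i, -, hiΛ, hix⟩ := hx 0 hlim.bot_lt
  obtain ⟨j, hij, hjΛ, hjx⟩ := hx (i + 1 + 1) (hlim.add_one_lt (hlim.add_one_lt hiΛ))
  exact ⟨i, j, (lt_add_one _).trans_le hij, hjΛ, eq_of_restrictionCode_eq (hix.trans hjx.symm)⟩

theorem toLex_lt_toLex_iff {u v : Ordinal.{u} → Bool} :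
    toLex u < toLex v ↔ ∃ δ, (∀ ξ < δ, u ξ = v ξ) ∧ u δ = false ∧ v δ = true := by
  refine exists_congr fun δ => and_congr_right fun _ => ?_
  change u δ < v δ ↔ _
  cases u δ <;> cases v δ <;> decide

theorem firstDiff_unique {u v : Ordinal.{u} → Bool} {δ δ' : Ordinal}
    (h : ∀ ξ < δ, u ξ = v ξ) (hne : u δ ≠ v δ) (h' : ∀ ξ < δ', u ξ = v ξ) (hne' : u δ' ≠ v δ') :
    δ = δ' := by
  rcases lt_trichotomy δ δ' with hlt | heq | hgt
  exacts [(hne (h' δ hlt)).elim, heq, (hne' (h δ' hgt)).elim]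

theorem exists_firstDiff_lt {u v : Ordinal.{u} → Bool} (hu : ∀ ξ, l.ord ≤ ξ → u ξ = false)
    (hv : ∀ ξ, l.ord ≤ ξ → v ξ = false) (h : u ≠ v) :
    ∃ δ < l.ord, (∀ ξ < δ, u ξ = v ξ) ∧ u δ ≠ v δ := by
  have hne : {ξ | u ξ ≠ v ξ}.Nonempty := Function.ne_iff.1 h
  refine ⟨sInf {ξ | u ξ ≠ v ξ}, ?_, fun ξ hξ => not_not.1 (notMem_of_lt_csInf' hξ),
    csInf_mem hne⟩
  by_contra! hle
  exact csInf_mem hne ((hu _ hle).trans (hv _ hle).symm)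

theorem not_forall_splits (hl0 : ℵ₀ ≤ l) (hpl : l ^< l = l) {Λ : Ordinal} (hΛ : l < Λ.cof)
    (hsupp : ∀ i ξ, l.ord ≤ ξ → y i ξ = false) (b : Bool) :
    ¬ ∀ i j, i < j → j < Λ → ∃ δ, (∀ ξ < δ, y i ξ = y j ξ) ∧ y i δ = !b ∧ y j δ = b := by
  intro h
  have hlim : IsSuccLimit Λ := Ordinal.one_lt_cof_iff.1 ((one_lt_aleph0.trans_le hl0).trans hΛ)
  choose! δ hδ using fun i (hi : i < Λ) => h i (i + 1) (lt_add_one i) (hlim.add_one_lt hi)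
  have hδl : ∀ i < Λ, δ i < l.ord := fun i hi => by
    by_contra! hle
    obtain ⟨-, h₁, h₂⟩ := hδ i hi
    rw [hsupp i _ hle] at h₁
    rw [hsupp _ _ hle] at h₂
    exact Bool.not_ne_self b (h₁.symm.trans h₂)
  obtain ⟨i, j, hij, hjΛ, -, hagree⟩ := exists_agreeing_of_lt_cof hl0 hpl hΛ hδl
  obtain ⟨hbelow, hi, hi₁⟩ := hδ i ((lt_add_one i).trans hij |>.trans hjΛ)
  obtain ⟨δ', hbelow', hi₁', hj'⟩ := h (i + 1) j hij hjΛ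
  have hj : y j (δ i) = !b := (hagree _ le_rfl).symm.trans hi
  have hsplit : ∀ ξ < δ i, y (i + 1) ξ = y j ξ := fun ξ hξ =>
    (hbelow ξ hξ).symm.trans (hagree ξ hξ.le)
  have hδ' := firstDiff_unique hsplit (by rw [hi₁, hj]; cases b <;> decide) hbelow'
    (by rw [hi₁', hj']; cases b <;> decide)
  rw [hδ', hj'] at hj
  cases b <;> simp at hj

theorem exists_toLex_lt (hl0 : ℵ₀ ≤ l) (hpl : l ^< l = l) {Λ : Ordinal} (hΛ : l < Λ.cof)
    (hsupp : ∀ i ξ, l.ord ≤ ξ → y i ξ = false) (hinj : InjOn y (Iio Λ)) :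
    ∃ i j, i < j ∧ j < Λ ∧ toLex (y i) < toLex (y j) := by
  by_contra! h
  refine not_forall_splits hl0 hpl hΛ hsupp false fun i j hij hj => ?_
  have hne : toLex (y j) ≠ toLex (y i) := fun h =>
    hinj.ne hj (hij.trans hj) hij.ne' (toLex.injective h)
  obtain ⟨δ, hbelow, hj, hi⟩ := toLex_lt_toLex_iff.1 ((not_lt.1 (h i j hij hj)).lt_of_ne hne)
  exact ⟨δ, fun ξ hξ => (hbelow ξ hξ).symm, hi, hj⟩

theorem exists_toLex_gt (hl0 : ℵ₀ ≤ l) (hpl : l ^< l = l) {Λ : Ordinal} (hΛ : l < Λ.cof)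
    (hsupp : ∀ i ξ, l.ord ≤ ξ → y i ξ = false) (hinj : InjOn y (Iio Λ)) :
    ∃ i j, i < j ∧ j < Λ ∧ toLex (y j) < toLex (y i) := by
  by_contra! h
  refine not_forall_splits hl0 hpl hΛ hsupp true fun i j hij hj => ?_
  have hne : toLex (y i) ≠ toLex (y j) := fun h =>
    hinj.ne (hij.trans hj) hj hij.ne (toLex.injective h)
  exact toLex_lt_toLex_iff.1 ((not_lt.1 (h i j hij hj)).lt_of_ne hne)

def cone (y : Ordinal.{u} → Ordinal.{u} → Bool) (Z : Set Ordinal) (δ : Ordinal)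
    (u : Ordinal → Bool) : Set Ordinal :=
  {j ∈ Z | ∀ ξ < δ, y j ξ = u ξ}

def pruned (l : Cardinal.{u}) (y : Ordinal.{u} → Ordinal.{u} → Bool) (Z : Set Ordinal) :
    Set Ordinal :=
  {i ∈ Z | ∀ δ < l.ord, Large l (cone y Z δ (y i))}

def raises (l : Cardinal.{u}) (y : Ordinal.{u} → Ordinal.{u} → Bool) (Z : Set Ordinal)
    (i : Ordinal) : Set Ordinal :=
  {δ | δ < l.ord ∧ y i δ = false ∧ Large l (cone y Z (δ + 1) (Function.update (y i) δ true))}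

variable {Z : Set Ordinal.{u}}

theorem cone_subset {δ : Ordinal} {u : Ordinal → Bool} : cone y Z δ u ⊆ Z := sep_subset _ _

theorem cone_congr {δ : Ordinal} {u v : Ordinal → Bool} (h : ∀ ξ < δ, u ξ = v ξ) :
    cone y Z δ u = cone y Z δ v := by
  ext j
  exact and_congr_right fun _ => forall₂_congr fun ξ hξ => by rw [h ξ hξ]

theorem large_pruned (hl0 : ℵ₀ ≤ l) (hpl : l ^< l = l) (hZ : Large l Z) :
    Large l (pruned l y Z) := by
  by_contra hP
  have hbad : Large l (Z \ pruned l y Z) :=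
    (hZ.of_subset_union hl0 (subset_sdiff_union Z _)).resolve_right hP
  have hsmall : ∀ i ∈ Z \ pruned l y Z, ∃ δ < l.ord, ¬ Large l (cone y Z δ (y i)) :=
    fun i hi => by simpa [pruned, hi.1] using hi.2
  choose! δ hδ hδsmall using hsmall
  obtain ⟨W, hWsub, hW, hagree⟩ := exists_large_agreeing (y := y) hl0 hpl hbad hδ
  obtain ⟨i, hi⟩ := hW.nonempty
  refine hδsmall i (hWsub hi) (hW.mono fun j hj => ⟨(hWsub hj).1, fun ξ hξ => ?_⟩)
  exact ((hagree i hi j hj).2 ξ hξ.le).symm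

theorem mem_raises (hl0 : ℵ₀ ≤ l) {i j δ : Ordinal} (hj : j ∈ pruned l y Z) (hδ : δ < l.ord)
    (hbelow : ∀ ξ < δ, y i ξ = y j ξ) (hi : y i δ = false) (hjδ : y j δ = true) :
    δ ∈ raises l y Z i := by
  refine ⟨hδ, hi, ?_⟩
  rw [cone_congr (v := y j) fun ξ hξ => ?_]
  · exact hj.2 _ ((isSuccLimit_ord hl0).add_one_lt hδ)
  rcases (lt_add_one_iff.1 hξ).lt_or_eq with hξ | rfl
  · rw [Function.update_of_ne hξ.ne]
    exact hbelow ξ hξ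
  · rw [Function.update_self, hjδ]

theorem exists_unbounded_raises (hl0 : ℵ₀ ≤ l) (hpl : l ^< l = l)
    (hsupp : ∀ i ξ, l.ord ≤ ξ → y i ξ = false) (hZ : Large l Z) (hinj : InjOn y Z) :
    ∃ i ∈ Z, ∀ β < l.ord, ∃ δ ∈ raises l y Z i, β ≤ δ := by
  by_contra! h
  choose! B hBl hB using fun i (hi : i ∈ pruned l y Z) => h i hi.1
  obtain ⟨W, hWsub, hW, hagree⟩ :=
    exists_large_agreeing (y := y) hl0 hpl (large_pruned hl0 hpl hZ) hBl
  obtain ⟨i, hi, j, hj, hij⟩ := hW.nontrivial hl0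
  obtain ⟨δ, hδl, hbelow, hne⟩ :=
    exists_firstDiff_lt (hsupp i) (hsupp j) (hinj.ne (hWsub hi).1 (hWsub hj).1 hij)
  obtain ⟨hBij, hagreeB⟩ := hagree i hi j hj
  have hBδ : B i < δ := lt_of_not_ge fun hle => hne (hagreeB δ hle)
  cases hyi : y i δ
  · have hyj : y j δ = true := by
      cases h : y j δ
      exacts [absurd (hyi.trans h.symm) hne, rfl]
    exact (hB i (hWsub hi) δ (mem_raises hl0 (hWsub hj) hδl hbelow hyi hyj)).not_gt hBδ
  · have hyj : y j δ = false := by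
      cases h : y j δ
      exacts [rfl, absurd (hyi.trans h.symm) hne]
    refine (hB j (hWsub hj) δ (mem_raises hl0 (hWsub hi) hδl (fun ξ hξ => ?_) hyj hyi)).not_gt ?_
    exacts [(hbelow ξ hξ).symm, hBij ▸ hBδ]

theorem toLex_lt_of_mem_cone {u : Ordinal → Bool} {δ₁ δ₂ j₁ j₂ : Ordinal} (hu : u δ₁ = false)
    (hδ : δ₁ < δ₂) (hj₁ : j₁ ∈ cone y Z (δ₁ + 1) (Function.update u δ₁ true))
    (hj₂ : j₂ ∈ cone y Z (δ₂ + 1) (Function.update u δ₂ true)) :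
    toLex (y j₂) < toLex (y j₁) := by
  have h₂ : ∀ ξ ≤ δ₁, y j₂ ξ = u ξ := fun ξ hξ => by
    rw [hj₂.2 ξ ((hξ.trans_lt hδ).trans (lt_add_one δ₂)),
      Function.update_of_ne (hξ.trans_lt hδ).ne]
  refine toLex_lt_toLex_iff.2 ⟨δ₁, fun ξ hξ => ?_, (h₂ δ₁ le_rfl).trans hu, ?_⟩
  · rw [h₂ ξ hξ.le, hj₁.2 ξ (hξ.trans (lt_add_one δ₁)), Function.update_of_ne hξ.ne]
  · rw [hj₁.2 δ₁ (lt_add_one δ₁), Function.update_self]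

theorem exists_isRelSeq_add_one (hl0 : ℵ₀ ≤ l) (hZP : Z ⊆ Iio (succ l).ord) {i₀ : Ordinal}
    (hraises : ∀ β < l.ord, ∃ δ ∈ raises l y Z i₀, β ≤ δ) {γ : Ordinal} (hγ : γ < (succ l).ord)
    (hseq : ∀ W ⊆ Z, Large l W →
      ∃ g, Ordinal.IsRelSeq (fun j j' => toLex (y j') < toLex (y j)) W γ g) :
    ∃ g, Ordinal.IsRelSeq (fun j j' => toLex (y j') < toLex (y j)) Z (γ + 1) g := by
  have hlim := isSuccLimit_ord hl0
  obtain ⟨δ₁, hδ₁, -⟩ := hraises 0 hlim.bot_lt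
  obtain ⟨δ₂, hδ₂, hδ₁₂⟩ := hraises (δ₁ + 1) (hlim.add_one_lt hδ₁.1)
  obtain ⟨g, hgZ, hg⟩ := hseq _ cone_subset hδ₁.2.2
  have hβ : ⨆ k : Iio γ, g k + 1 < (succ l).ord := by
    refine Ordinal.iSup_Iio_lt (f := fun k => g k + 1)
      (Ordinal.card_lt_cof_of_lt_ord (isRegular_succ hl0) hγ) fun k hk => ?_
    exact (isSuccLimit_ord (hl0.trans (le_succ l))).add_one_lt (hZP (cone_subset (hgZ hk)))
  obtain ⟨t, ht, htβ⟩ := (hδ₂.2.2.inter_Ici hl0 hβ).nonempty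
  refine ⟨fun k => if k < γ then g k else t, fun k hk => ?_, fun k k' hkk' hk' => ?_⟩
  · by_cases hkγ : k < γ
    · simpa [hkγ] using cone_subset (hgZ hkγ)
    · simpa [hkγ] using cone_subset ht
  have hkγ : k < γ := hkk'.trans_le (lt_add_one_iff.1 hk')
  by_cases hk'γ : k' < γ
  · simpa [hkγ, hk'γ] using hg hkk' hk'γ
  simp only [hkγ, hk'γ, if_true, if_false]
  refine ⟨(lt_add_one _).trans_le ((Ordinal.le_iSup_Iio (fun k => g k + 1) hkγ).trans htβ), ?_⟩
  exact toLex_lt_of_mem_cone hδ₁.2.1 ((lt_add_one δ₁).trans_le hδ₁₂) (hgZ hkγ) ht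

theorem exists_isRelSeq_of_isSuccLimit (hl0 : ℵ₀ ≤ l) (hpl : l ^< l = l)
    (hZP : Z ⊆ Iio (succ l).ord) {i₀ : Ordinal}
    (hraises : ∀ β < l.ord, ∃ δ ∈ raises l y Z i₀, β ≤ δ) {γ : Ordinal} (hlim : IsSuccLimit γ)
    (hγ : γ < (succ l).ord)
    (hseq : ∀ γ' < γ, ∀ W ⊆ Z, Large l W →
      ∃ g, Ordinal.IsRelSeq (fun j j' => toLex (y j') < toLex (y j)) W γ' g) :
    ∃ g, Ordinal.IsRelSeq (fun j j' => toLex (y j') < toLex (y j)) Z γ g := by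
  obtain ⟨δ, hδmono, hδ⟩ :=
    Ordinal.exists_strictMono_mem (isSuccLimit_ord hl0) (fun _ h => h.1) hraises
  rw [cof_ord_eq_of_powerlt_eq hl0 hpl] at hδ
  obtain ⟨s, hsγ, hs⟩ := Ordinal.exists_surjOn_Iio (lt_succ_iff.1 (lt_ord.1 hγ)) hlim.bot_lt
  refine Ordinal.exists_isRelSeq_of_blocks (isRegular_succ hl0) hZP (ord_le_ord.2 (le_succ l))
    (N := fun m => cone y Z (δ m + 1) (Function.update (y i₀) (δ m) true))
    (q := fun m => s m + 1) (fun _ _ => cone_subset)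
    (fun m hm => (hlim.add_one_lt (hsγ hm)).trans hγ) (fun k hk => ?_)
    (fun m m' hmm' hm' j hj j' hj' => ?_) (fun m hm β hβ => ?_)
  · obtain ⟨m, hm, rfl⟩ := hs hk
    exact ⟨m, hm, lt_add_one _⟩
  · exact toLex_lt_of_mem_cone (hδ m (lt_ord.1 (hmm'.trans hm'))).2.1 (hδmono hmm') hj hj'
  · exact hseq _ (hlim.add_one_lt (hsγ hm)) _ (inter_subset_left.trans cone_subset)
      ((hδ m (lt_ord.1 hm)).2.2.inter_Ici hl0 hβ)

theorem exists_isRelSeq_toLex_gt (hl0 : ℵ₀ ≤ l) (hpl : l ^< l = l)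
    (hsupp : ∀ i ξ, l.ord ≤ ξ → y i ξ = false) (hinj : InjOn y (Iio (succ l).ord))
    {γ : Ordinal} (hγ : γ < (succ l).ord) (hZP : Z ⊆ Iio (succ l).ord) (hZ : Large l Z) :
    ∃ g, Ordinal.IsRelSeq (fun j j' => toLex (y j') < toLex (y j)) Z γ g := by
  induction γ using WellFoundedLT.induction generalizing Z with | _ γ ih => ?_
  obtain ⟨i₀, -, hraises⟩ := exists_unbounded_raises hl0 hpl hsupp hZ (hinj.mono hZP)
  rcases Ordinal.zero_or_succ_or_isSuccLimit γ with rfl | ⟨γ, rfl⟩ | hlim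
  · exact ⟨id, fun k hk => absurd hk (not_lt_zero (a := k)),
      fun _ k' _ hk' => absurd hk' (not_lt_zero (a := k'))⟩
  · rw [succ_eq_add_one] at hγ ih ⊢
    exact exists_isRelSeq_add_one hl0 hZP hraises ((lt_add_one γ).trans hγ) fun W hW hWl =>
      ih γ (lt_add_one γ) ((lt_add_one γ).trans hγ) (hW.trans hZP) hWl
  · exact exists_isRelSeq_of_isSuccLimit hl0 hpl hZP hraises hlim hγ fun γ' hγ' W hW hWl =>
      ih γ' hγ' (hγ'.trans hγ) (hW.trans hZP) hWl

end LexBranch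

open LexBranch

theorem exists_branches {l χ : Cardinal.{u}} (hχ : χ ≤ 2 ^ l) :
    ∃ E : Ordinal.{u} → Ordinal.{u} → Bool,
      (∀ α ξ, l.ord ≤ ξ → E α ξ = false) ∧ InjOn E (Iio χ.ord) := by
  have : #(Iio χ.ord) ≤ #(Iio l.ord → Bool) := by
    simp only [Cardinal.mk_arrow, mk_bool, Cardinal.mk_Iio_ordinal, card_ord, lift_lift,
      Cardinal.lift_ofNat]
    rw [← Cardinal.lift_two.{u + 1, u}, ← lift_power, lift_le]
    exact hχ
  obtain ⟨e⟩ := this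
  refine ⟨fun α ξ => if h : α < χ.ord ∧ ξ < l.ord then e ⟨α, h.1⟩ ⟨ξ, h.2⟩ else false,
    fun α ξ hξ => dif_neg fun h => hξ.not_gt h.2, fun α hα β hβ h => ?_⟩
  have : e ⟨α, hα⟩ = e ⟨β, hβ⟩ := funext fun ξ => by
    simpa [mem_Iio.1 hα, mem_Iio.1 hβ, ξ.2.out] using congrFun h ξ
  exact congrArg Subtype.val (e.injective this)

open scoped Classical in
def lexColoring (c : Ordinal.{u} → Ordinal.{u} → Ordinal.{v})
    (E : Ordinal.{u} → Ordinal.{u} → Bool) (α β : Ordinal.{u}) : Ordinal.{v} :=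
  2 * c α β + (decide (toLex (E α) < toLex (E β))).toNat

theorem lexColoring_lt {κ : Cardinal.{v}} {c : Ordinal.{u} → Ordinal.{u} → Ordinal.{v}}
    (E : Ordinal.{u} → Ordinal.{u} → Bool) {α β : Ordinal.{u}} (hc : c α β < κ.ord) :
    lexColoring c E α β < (2 * κ).ord := by
  have hbit : ∀ b : Bool, 2 * c α β + (b.toNat : Ordinal.{v}) < 2 * c α β + 2 := fun b => by
    gcongr
    cases b <;> simp
  refine lt_of_lt_of_le ?_ (two_mul_ord_le κ)
  calc lexColoring c E α β < 2 * c α β + 2 := hbit _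
    _ = 2 * (c α β + 1) := by rw [mul_add, mul_one]
    _ ≤ 2 * κ.ord := by gcongr; exact add_one_le_of_lt hc

theorem eq_of_lexColoring_eq {c : Ordinal.{u} → Ordinal.{u} → Ordinal.{v}}
    {E : Ordinal.{u} → Ordinal.{u} → Bool} {α β α' β' : Ordinal.{u}}
    (h : lexColoring c E α β = lexColoring c E α' β') :
    c α β = c α' β' ∧ (toLex (E α) < toLex (E β) ↔ toLex (E α') < toLex (E β')) := by
  obtain ⟨hc, hlt⟩ := Ordinal.two_mul_add_toNat_inj h
  exact ⟨hc, by simpa using hlt⟩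

theorem SqBr.ord_pos {χ θ : Cardinal.{u}} {σ : Cardinal.{v}} (h : SqBr χ θ σ) (hθ : 0 < θ.ord) :
    0 < χ.ord := by
  by_contra! hχ
  obtain ⟨f, hf, -⟩ := h (fun _ _ => 0) fun α _ hα _ =>
    absurd (hα.trans_le hχ) (not_lt_zero (a := α))
  exact not_lt_zero (a := f 0) ((hf 0 hθ).trans_le hχ)

theorem SqBr.ord_le {χ θ : Cardinal.{u}} {σ : Cardinal.{v}} (h : SqBr χ θ σ) (hσ : 0 < σ.ord) :
    θ.ord ≤ χ.ord := by
  obtain ⟨f, hfχ, hf, -⟩ := h (fun _ _ => 0) fun _ _ _ _ => hσ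
  have hinj : InjOn f (Iio θ.ord) := StrictMonoOn.injOn fun i _ j hj hij => hf i j hij hj
  have hmk : #(f '' Iio θ.ord) ≤ #(Iio χ.ord) :=
    mk_le_mk_of_subset (by rintro _ ⟨i, hi, rfl⟩; exact hfχ i hi)
  rw [mk_image_eq_of_injOn _ _ hinj, Cardinal.mk_Iio_ordinal, Cardinal.mk_Iio_ordinal, card_ord,
    card_ord, lift_le] at hmk
  exact ord_le_ord.2 hmk

theorem exists_homogeneous_of_le_two {χ : Cardinal.{u}} {κ : Cardinal.{v}} {γ : Ordinal.{u}}
    (hγ2 : γ ≤ 2) (hγχ : γ ≤ χ.ord) (hκ : 0 < κ.ord) (c : Ordinal → Ordinal → Ordinal.{v})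
    (hc : ∀ α β : Ordinal, α < χ.ord → β < χ.ord → c α β < κ.ord) :
    ∃ ε : Ordinal, ε < κ.ord ∧ ∃ f : Ordinal → Ordinal,
      (∀ i, i < γ → f i < χ.ord) ∧
      (∀ i j, i < j → j < γ → f i < f j) ∧
      (∀ i j, i < j → j < γ → c (f i) (f j) = ε) := by
  have hle_one : ∀ j : Ordinal, j < 2 → j ≤ 1 := fun j hj => by
    rw [← one_add_one_eq_two] at hj
    exact lt_add_one_iff.1 hj
  have hpair : ∀ i j : Ordinal, i < j → j < 2 → i = 0 ∧ j = 1 := fun i j hij hj => by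
    obtain rfl : i = 0 := Order.lt_one_iff.1 (hij.trans_le (hle_one j hj))
    exact ⟨rfl, (hle_one j hj).antisymm (Order.one_le_iff_pos.2 hij)⟩
  rcases hγ2.lt_or_eq with hγ | rfl
  · have hnopair : ∀ i j : Ordinal, i < j → j < γ → False := fun i j hij hj => by
      obtain ⟨-, rfl⟩ := hpair i j hij (hj.trans hγ)
      exact (hle_one γ hγ).not_gt hj
    exact ⟨0, hκ, id, fun i hi => hi.trans_le hγχ, fun i j hij hj => (hnopair i j hij hj).elim,
      fun i j hij hj => (hnopair i j hij hj).elim⟩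
  · have h1 : (1 : Ordinal) < χ.ord := one_lt_two.trans_le hγχ
    refine ⟨c 0 1, hc 0 1 (zero_lt_one.trans h1) h1, id, fun i hi => hi.trans_le hγχ,
      fun i j hij _ => hij, fun i j hij hj => ?_⟩
    obtain ⟨rfl, rfl⟩ := hpair i j hij hj
    rfl

theorem exists_homogeneous_of_lt_aleph0 {l θ χ : Cardinal.{u}} {κ : Cardinal.{v}}
    (hfin : l < ℵ₀) (hl : l ^< l = l) (hlθ : l < θ.ord.cof) (hbr : SqBr χ θ (2 * κ))
    {γ : Ordinal.{u}} (hγ : γ < (succ l).ord) (c : Ordinal → Ordinal → Ordinal.{v})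
    (hc : ∀ α β : Ordinal, α < χ.ord → β < χ.ord → c α β < κ.ord) :
    ∃ ε : Ordinal, ε < κ.ord ∧ ∃ f : Ordinal → Ordinal,
      (∀ i, i < γ → f i < χ.ord) ∧
      (∀ i j, i < j → j < γ → f i < f j) ∧
      (∀ i j, i < j → j < γ → c (f i) (f j) = ε) := by
  have hχ : 0 < χ.ord := hbr.ord_pos (Ordinal.cof_pos.1 ((zero_le (a := l)).trans_lt hlθ))
  have hκ : 0 < κ.ord := (zero_le (a := c 0 0)).trans_lt (hc 0 0 hχ hχ)
  have h2κ : 0 < (2 * κ).ord := hκ.trans_le (ord_le_ord.2 (le_mul_left two_ne_zero))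
  have h3 : (succ (2 : Cardinal)).ord = 2 + 1 := by
    have : succ (2 : Cardinal) = ((3 : ℕ) : Cardinal) := by
      rw [← Nat.cast_ofNat, Cardinal.succ_natCast]
      norm_num
    rw [this, ord_natCast]
    norm_num
  have hγ2 : γ ≤ 2 :=
    lt_add_one_iff.1 (h3 ▸ hγ.trans_le (ord_le_ord.2 (succ_le_succ (le_two_of_powerlt_eq hfin hl))))
  exact exists_homogeneous_of_le_two hγ2
    (hγ.le.trans ((ord_succ_le_of_lt_cof hlθ).trans (hbr.ord_le h2κ))) hκ c hc

theorem exists_homogeneous_of_aleph0_le {l θ χ : Cardinal.{u}} {κ : Cardinal.{v}}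
    (hl0 : ℵ₀ ≤ l) (hl : l ^< l = l) (hlθ : l < θ.ord.cof) (hχ : χ ≤ 2 ^ l)
    (hbr : SqBr χ θ (2 * κ)) {γ : Ordinal.{u}} (hγ : γ < (succ l).ord)
    (c : Ordinal → Ordinal → Ordinal.{v})
    (hc : ∀ α β : Ordinal, α < χ.ord → β < χ.ord → c α β < κ.ord) :
    ∃ ε : Ordinal, ε < κ.ord ∧ ∃ f : Ordinal → Ordinal,
      (∀ i, i < γ → f i < χ.ord) ∧
      (∀ i j, i < j → j < γ → f i < f j) ∧
      (∀ i j, i < j → j < γ → c (f i) (f j) = ε) := by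
  obtain ⟨E, hEsupp, hEinj⟩ := exists_branches hχ
  obtain ⟨f, hfχ, hf, v₁, v₂, hv⟩ :=
    hbr (lexColoring c E) fun α β hα hβ => lexColoring_lt E (hc α β hα hβ)
  have hsupp : ∀ i ξ, l.ord ≤ ξ → E (f i) ξ = false := fun i => hEsupp (f i)
  have hinj : InjOn (fun i => E (f i)) (Iio θ.ord) :=
    hEinj.comp (StrictMonoOn.injOn fun i _ j hj hij => hf i j hij hj) fun i hi => hfχ i hi
  obtain ⟨i₁, j₁, hij₁, hj₁, hlt₁⟩ := exists_toLex_lt hl0 hl hlθ hsupp hinj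
  obtain ⟨i₀, j₀, hij₀, hj₀, hlt₀⟩ := exists_toLex_gt hl0 hl hlθ hsupp hinj
  -- The value at the increasing pair `(i₁, j₁)` is odd, so all decreasing pairs share the
  -- other, even, value.
  have hcolor : ∀ i j, i < j → j < θ.ord → toLex (E (f j)) < toLex (E (f i)) →
      c (f i) (f j) = c (f i₀) (f j₀) := by
    have hodd : ∀ i j, toLex (E (f j)) < toLex (E (f i)) →
        lexColoring c E (f i) (f j) ≠ lexColoring c E (f i₁) (f j₁) := fun i j hlt h =>
      lt_asymm hlt ((eq_of_lexColoring_eq h).2.2 hlt₁)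
    intro i j hij hj hlt
    have heq : lexColoring c E (f i) (f j) = lexColoring c E (f i₀) (f j₀) := by
      grind [hv i j hij hj, hv i₀ j₀ hij₀ hj₀, hv i₁ j₁ hij₁ hj₁, hodd i j hlt, hodd i₀ j₀ hlt₀]
    exact (eq_of_lexColoring_eq heq).1
  have hθ := ord_succ_le_of_lt_cof hlθ
  have hlarge : Large l (Iio (succ l).ord) := by
    rw [Large, Cardinal.mk_Iio_ordinal, card_ord, lift_lt]
    exact lt_succ l
  obtain ⟨g, hgP, hg⟩ := exists_isRelSeq_toLex_gt hl0 hl hsupp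
    (hinj.mono (Iio_subset_Iio hθ)) hγ subset_rfl hlarge
  have hgθ : ∀ k < γ, g k < θ.ord := fun k hk => (mem_Iio.1 (hgP hk)).trans_le hθ
  exact ⟨c (f i₀) (f j₀), hc _ _ (hfχ _ (hij₀.trans hj₀)) (hfχ _ hj₀), fun k => f (g k),
    fun k hk => hfχ _ (hgθ k hk), fun k k' hkk' hk' => hf _ _ (hg hkk' hk').1 (hgθ k' hk'),
    fun k k' hkk' hk' => hcolor _ _ (hg hkk' hk').1 (hgθ k' hk') (hg hkk' hk').2⟩

end

/-- If `λ = λ^{<λ} < cf(θ)`, `χ ≤ 2^λ` and `χ → [θ]²_{2κ,2}`, then for every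
ordinal `γ < λ⁺` we have `χ → (γ)²_κ`: every `κ`-coloring of pairs below `χ` has a
monochromatic set of order type `γ`. -/
theorem sqBr_imp_ordinary (l θ χ κ : Cardinal)
    (hl : l ^< l = l) (hlθ : l < θ.ord.cof)
    (hχ : χ ≤ 2 ^ l) (hbr : SqBr χ θ (2 * κ)) :
    ∀ γ : Ordinal, γ < (Order.succ l).ord →
      ∀ c : Ordinal → Ordinal → Ordinal,
        (∀ α β : Ordinal, α < χ.ord → β < χ.ord → c α β < κ.ord) →
        ∃ ε : Ordinal, ε < κ.ord ∧ ∃ f : Ordinal → Ordinal,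
          (∀ i, i < γ → f i < χ.ord) ∧
          (∀ i j, i < j → j < γ → f i < f j) ∧
          (∀ i j, i < j → j < γ → c (f i) (f j) = ε) := by
  intro γ hγ c hc
  rcases lt_or_ge l ℵ₀ with hfin | hl0
  · exact exists_homogeneous_of_lt_aleph0 hfin hl hlθ hbr hγ c hc
  · exact exists_homogeneous_of_aleph0_le hl0 hl hlθ hχ hbr hγ c hc
end

section
/- Let X be a regular (T₃) Hausdorff topological space with density ≥ λ, and assume λ → (μ,(μ;μ))². Then X has a discrete subspace of size μ. -/
open Cardinal

/-!
Since `X` has density at least `λ`, no set of fewer than `λ` points is dense, so there is a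
left-separated sequence `⟨x_α : α < λ⟩`; by regularity each `x_α` has an open neighbourhood `V_α`
whose closure misses every earlier `x_β`. Colour `{α < β}` by whether `x_β ∈ cl V_α`. A
`0`-homogeneous sequence `⟨α_i⟩` makes `{x_{α_i}}` discrete, isolated by the `V_{α_i}`. In the
other case `x_{β_j} ∈ cl V_{α_i}` for `i ≤ j`, and `x_{β_j}` is isolated in `{x_{β_i}}` by
`V_{β_j} \ cl V_{α_{j+1}}`: the earlier points miss `V_{β_j}`, the later ones lie in
`cl V_{α_{j+1}}`, and `x_{β_j}` does not, as `β_j < α_{j+1}`.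
-/

open Set

universe u

section Topology

variable {X : Type*} [TopologicalSpace X]

lemma exists_isOpen_mem_disjoint_closure [RegularSpace X] {x : X} {s : Set X}
    (hx : x ∉ closure s) : ∃ V, IsOpen V ∧ x ∈ V ∧ Disjoint (closure V) s := by
  obtain ⟨V, ⟨hxV, hV⟩, hVs⟩ :=
    (hasBasis_opens_closure x).mem_iff.1 (isClosed_closure.isOpen_compl.mem_nhds hx)
  exact ⟨V, hV, hxV, disjoint_left.2 fun _ hp hps ↦ hVs hp (subset_closure hps)⟩

lemma IsDiscrete.exists_isOpen_mem_inter_eq_singleton {D : Set X} (hD : IsDiscrete D) :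
    ∀ x ∈ D, ∃ U : Set X, IsOpen U ∧ x ∈ U ∧ U ∩ D = {x} := by
  intro x hx
  obtain ⟨U, hU, hUD⟩ := isDiscrete_iff_forall_mem_exists_isOpen.1 hD x hx
  exact ⟨U, hU, (hUD.symm ▸ mem_singleton x : x ∈ U ∩ D).1, hUD⟩

def IsolatedFamilyOn {ι : Type*} (f : ι → X) (S : Set ι) : Prop :=
  ∀ i ∈ S, ∃ U, IsOpen U ∧ f i ∈ U ∧ ∀ j ∈ S, f j ∈ U → j = i

namespace IsolatedFamilyOn

variable {ι : Type*} {f : ι → X} {S : Set ι}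

lemma injOn (h : IsolatedFamilyOn f S) : InjOn f S := by
  intro i hi j hj hij
  obtain ⟨U, -, hiU, hU⟩ := h i hi
  exact (hU j hj (hij ▸ hiU)).symm

lemma isDiscrete_image (h : IsolatedFamilyOn f S) : IsDiscrete (f '' S) := by
  refine isDiscrete_iff_forall_mem_exists_isOpen.2 ?_
  rintro _ ⟨i, hi, rfl⟩
  obtain ⟨U, hU, hiU, hUi⟩ := h i hi
  refine ⟨U, hU, Subset.antisymm ?_ (singleton_subset_iff.2 ⟨hiU, mem_image_of_mem f hi⟩)⟩
  rintro _ ⟨hjU, j, hj, rfl⟩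
  rw [hUi j hj hjU, mem_singleton_iff]

end IsolatedFamilyOn

def IsLeftSeparating (x : Ordinal → X) (V : Ordinal → Set X) (L : Ordinal) : Prop :=
  ∀ α < L, IsOpen (V α) ∧ x α ∈ V α ∧ ∀ β < α, x β ∉ closure (V α)

namespace IsLeftSeparating

variable {x : Ordinal → X} {V : Ordinal → Set X} {L ξ : Ordinal} {a b : Ordinal → Ordinal}

lemma isolatedFamilyOn_comp_left (h : IsLeftSeparating x V L)
    (hab : ∀ i < ξ, a i < b i ∧ b i < L) (hba : ∀ i j, i < j → j < ξ → b i < a j)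
    (hc : ∀ i j, i < j → j < ξ → x (a j) ∉ closure (V (a i))) :
    IsolatedFamilyOn (x ∘ a) (Iio ξ) := by
  intro i hi
  obtain ⟨hVo, hxV, hsep⟩ := h (a i) ((hab i hi).1.trans (hab i hi).2)
  refine ⟨V (a i), hVo, hxV, fun j hj hxj ↦ ?_⟩
  rcases lt_trichotomy j i with hji | rfl | hij
  · exact absurd (subset_closure hxj) (hsep _ ((hab j hj).1.trans (hba j i hji hi)))
  · rfl
  · exact absurd (subset_closure hxj) (hc i j hij hj)

lemma isolatedFamilyOn_comp_right (h : IsLeftSeparating x V L)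
    (hab : ∀ i < ξ, a i < b i ∧ b i < L) (hba : ∀ i j, i < j → j < ξ → b i < a j)
    (hc : ∀ i j, i ≤ j → j < ξ → x (b j) ∈ closure (V (a i))) :
    IsolatedFamilyOn (x ∘ b) (Iio ξ) := by
  intro i hi
  obtain ⟨hVo, hxV, hsep⟩ := h (b i) (hab i hi).2
  let W := if i + 1 < ξ then closure (V (a (i + 1))) else ∅
  have hW_eq (hs : i + 1 < ξ) : W = closure (V (a (i + 1))) := if_pos hs
  have hW : IsClosed W := by
    unfold W
    split_ifs
    exacts [isClosed_closure, isClosed_empty]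
  have hxW : x (b i) ∉ W := by
    by_cases hs : i + 1 < ξ
    · rw [hW_eq hs]
      exact (h _ ((hab _ hs).1.trans (hab _ hs).2)).2.2 _ (hba i _ (lt_add_one i) hs)
    · simp only [W, if_neg hs, notMem_empty, not_false_eq_true]
  refine ⟨V (b i) \ W, hVo.sdiff hW, ⟨hxV, hxW⟩, fun j hj hxj ↦ ?_⟩
  rcases lt_trichotomy j i with hji | rfl | hij
  · exact absurd (subset_closure hxj.1) (hsep _ ((hba j i hji hi).trans (hab i hi).1))
  · rfl
  · have hs : i + 1 < ξ := (Order.add_one_le_of_lt hij).trans_lt hj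
    exact absurd (hW_eq hs ▸ hc _ j (Order.add_one_le_of_lt hij) hj) hxj.2

end IsLeftSeparating

end Topology

section Construction

variable {X : Type u} [TopologicalSpace X]

lemma exists_forall_notMem_closure_image_Iio [Nonempty X] {l : Cardinal.{u}}
    (hdens : ∀ D : Set X, Dense D → l ≤ #D) :
    ∃ x : Ordinal.{u} → X, ∀ α < l.ord, x α ∉ closure (x '' Iio α) := by
  let x : Ordinal.{u} → X := Ordinal.lt_wf.fix fun α y ↦
    Classical.epsilon fun p ↦ p ∉ closure (range fun β : Iio α ↦ y β β.2)
  refine ⟨x, fun α hα ↦ ?_⟩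
  have hx : x α = Classical.epsilon fun p ↦ p ∉ closure (x '' Iio α) := by
    rw [image_eq_range]
    exact Ordinal.lt_wf.fix_eq _ α
  have hsmall : #(x '' Iio α) < l := by
    have h := mk_image_le_lift (f := x) (s := Iio α)
    rw [Cardinal.mk_Iio_ordinal, lift_lift, lift_le] at h
    exact h.trans_lt (lt_ord.1 hα)
  have hnotDense : ¬ Dense (x '' Iio α) := fun hD ↦ (hdens _ hD).not_gt hsmall
  rw [hx]
  exact Classical.epsilon_spec (p := fun p ↦ p ∉ closure (x '' Iio α))
    (by simpa [Dense] using hnotDense)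

lemma exists_isLeftSeparating [RegularSpace X] [Nonempty X] {l : Cardinal.{u}}
    (hdens : ∀ D : Set X, Dense D → l ≤ #D) :
    ∃ (x : Ordinal.{u} → X) (V : Ordinal.{u} → Set X), IsLeftSeparating x V l.ord := by
  obtain ⟨x, hx⟩ := exists_forall_notMem_closure_image_Iio hdens
  have hV : ∀ α, ∃ V, α < l.ord → IsOpen V ∧ x α ∈ V ∧ Disjoint (closure V) (x '' Iio α) :=
    fun α ↦ if hα : α < l.ord then (exists_isOpen_mem_disjoint_closure (hx α hα)).imp
      fun _ hV _ ↦ hV else ⟨∅, fun h ↦ absurd h hα⟩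
  choose V hV using hV
  refine ⟨x, V, fun α hα ↦ ?_⟩
  obtain ⟨hVo, hxV, hdisj⟩ := hV α hα
  exact ⟨hVo, hxV, fun β hβ hmem ↦ disjoint_left.1 hdisj hmem (mem_image_of_mem x hβ)⟩

end Construction

lemma mk_image_Iio_ord {X : Type u} {f : Ordinal.{u} → X} {κ : Cardinal.{u}}
    (hf : InjOn f (Iio κ.ord)) : #(f '' Iio κ.ord) = κ := by
  have h := mk_image_eq_of_injOn_lift f _ hf
  rwa [Cardinal.mk_Iio_ordinal, lift_lift, card_ord, lift_inj] at h

namespace ArrowMixed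

variable {l : Cardinal} {ξ : Ordinal}

lemma exists_homogeneous (h : ArrowMixed l ξ 1) (P : Ordinal → Ordinal → Prop) :
    ∃ a b : Ordinal → Ordinal, (∀ i < ξ, a i < b i ∧ b i < l.ord) ∧
      (∀ i j, i < j → j < ξ → b i < a j) ∧
      ((∀ i j, i < j → j < ξ → ¬ P (a i) (a j)) ∨
        ∀ i j, i ≤ j → j < ξ → P (a i) (b j)) := by
  classical
  have hlt (p : Prop) : (if p then 1 else 0 : Ordinal) < 1 + (1 : Cardinal).ord := by
    rw [ord_one, ← Order.succ_eq_add_one, Order.lt_succ_iff]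
    split_ifs <;> simp
  obtain ⟨ε, -, a, b, hab, hba, hc⟩ := h (fun α β ↦ if P α β then 1 else 0) fun _ _ _ _ ↦ hlt _
  refine ⟨a, b, hab, hba, hc.imp (fun ⟨_, hc⟩ i j hij hj hP ↦ ?_) fun ⟨hε, hc⟩ i j hij hj ↦ ?_⟩
  · simpa [hP] using hc i j hij hj
  · by_contra hP
    have hc₀ := hc i j hij hj
    rw [if_neg hP] at hc₀
    exact (hc₀ ▸ hε).not_gt zero_lt_one

lemma ne_zero (h : ArrowMixed l ξ 1) (hξ : ξ ≠ 0) : l ≠ 0 := by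
  obtain ⟨a, b, hab, -⟩ := h.exists_homogeneous fun _ _ ↦ True
  rintro rfl
  simpa using (hab 0 (pos_iff_ne_zero.2 hξ)).2

end ArrowMixed

/-- If `X` is a regular Hausdorff (T₃) space of density `≥ λ` and
`λ → (μ,(μ;μ))²` holds, then `X` has a discrete subspace of size `μ`. -/
theorem discrete_of_density {X : Type*} [TopologicalSpace X] [T3Space X]
    (l μ : Cardinal)
    (hdens : ∀ D : Set X, Dense D → l ≤ Cardinal.mk ↥D)
    (hpart : ArrowMixed l μ.ord 1) :
    ∃ D : Set X, Cardinal.mk ↥D = μ ∧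
      ∀ x ∈ D, ∃ U : Set X, IsOpen U ∧ x ∈ U ∧ U ∩ D = {x} := by
  cases isEmpty_or_nonempty X with
  | inl _ =>
    have hl : l = 0 := le_zero_iff.1 (by simpa using hdens ∅ fun p ↦ isEmptyElim p)
    have hμ : μ = 0 := by
      by_contra hμ
      exact hpart.ne_zero (by simpa using hμ) hl
    exact ⟨∅, by simp [hμ], by simp⟩
  | inr _ =>
    obtain ⟨x, V, hxV⟩ := exists_isLeftSeparating hdens
    obtain ⟨a, b, hab, hba, hc⟩ := hpart.exists_homogeneous fun α β ↦ x β ∈ closure (V α)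
    obtain ⟨f, hf⟩ : ∃ f : Ordinal → X, IsolatedFamilyOn f (Iio μ.ord) :=
      hc.elim (fun hc ↦ ⟨_, hxV.isolatedFamilyOn_comp_left hab hba hc⟩)
        fun hc ↦ ⟨_, hxV.isolatedFamilyOn_comp_right hab hba hc⟩
    exact ⟨f '' Iio μ.ord, mk_image_Iio_ord hf.injOn,
      hf.isDiscrete_image.exists_isOpen_mem_inter_eq_singleton⟩
end

section
/- In the forcing Q_p: if κ ∈ Θ, p ≤^ap_κ q, and p ≤^pr_κ r, then q ∪ r is a well-defined function in Q, it is a least upper bound of q and r, and moreover q ≤^pr_κ (q ∪ r) and r ≤^ap_κ (q ∪ r). -/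
open Cardinal

/-- The domain of a condition (a partial function `μ ⇀ {0,1}` coded as an
`Option Bool`-valued function). -/
def Dom (q : Ordinal.{0} → Option Bool) : Set Ordinal.{0} := {i | q i ≠ none}

/-- The `E_κ`-equivalence class of `i`, where `i E_κ j ↔ i + κ = j + κ`. -/
def Cls (κ : Cardinal.{0}) (i : Ordinal.{0}) : Set Ordinal.{0} :=
  {j | j + κ.ord = i + κ.ord}

/-- Membership in the forcing `Q`: a partial function from `μ` to `{0,1}` whose
domain meets each `E_κ`-class (`κ ∈ Θ`) in fewer than `∂_κ` points. -/
def InQ (μ : Cardinal.{0}) (Θ : Set Cardinal.{0}) (d : Cardinal.{0} → Cardinal.{0})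
    (q : Ordinal.{0} → Option Bool) : Prop :=
  (∀ i, q i ≠ none → i < μ.ord) ∧
  ∀ κ ∈ Θ, ∀ i : Ordinal.{0}, i < μ.ord →
    Cardinal.mk ↥(Cls κ i ∩ Dom q) < Cardinal.lift.{1} (d κ)

/-- The `E_κ`-class `C` grows from `p` to `q`:
`∅ ≠ C ∩ dom(p) ≠ C ∩ dom(q)`. -/
def Grows (κ : Cardinal.{0}) (p q : Ordinal.{0} → Option Bool)
    (C : Set Ordinal.{0}) : Prop :=
  (∃ i : Ordinal.{0}, C = Cls κ i) ∧ (C ∩ Dom p).Nonempty ∧ C ∩ Dom p ≠ C ∩ Dom q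

/-- The order on `Q`: `p ≤ q` iff `p ⊆ q` and for every `θ ∈ Θ` fewer than
`∂_θ` many `E_θ`-classes grow from `p` to `q`. -/
def QLe (Θ : Set Cardinal.{0}) (d : Cardinal.{0} → Cardinal.{0})
    (p q : Ordinal.{0} → Option Bool) : Prop :=
  (∀ i, p i ≠ none → q i = p i) ∧
  ∀ θ ∈ Θ, Cardinal.mk ↥{C : Set Ordinal.{0} | Grows θ p q C} <
    Cardinal.lift.{1} (d θ)

/-- The pure order: `p ≤^pr_κ q` iff `p ≤ q` and no `E_κ`-class grows from `p`
to `q`. -/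
def QLePr (Θ : Set Cardinal.{0}) (d : Cardinal.{0} → Cardinal.{0}) (κ : Cardinal.{0})
    (p q : Ordinal.{0} → Option Bool) : Prop :=
  QLe Θ d p q ∧ ∀ C : Set Ordinal.{0}, ¬ Grows κ p q C

/-- The apure order: `p ≤^ap_κ q` iff `p ≤ q` and `dom(q)` meets exactly the same
`E_κ`-classes as `dom(p)`. -/
def QLeAp (Θ : Set Cardinal.{0}) (d : Cardinal.{0} → Cardinal.{0}) (κ : Cardinal.{0})
    (p q : Ordinal.{0} → Option Bool) : Prop :=
  QLe Θ d p q ∧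
  ∀ i : Ordinal.{0}, (Cls κ i ∩ Dom p).Nonempty ↔ (Cls κ i ∩ Dom q).Nonempty

/-- The union of two conditions (as partial functions). -/
def UnionQ (p q : Ordinal.{0} → Option Bool) : Ordinal.{0} → Option Bool :=
  fun i => (p i).orElse (fun _ => q i)

/-!
Every `E_κ`-class that meets `dom q` already meets `dom p` (apure), and on such a class
`dom r` adds nothing to `dom p` (pure). Hence `q` and `r` agree wherever both are defined,
and a class `C` that grows from `q` to `q ∪ r` must gain a point of `dom r \ dom p`: for
`θ ≤ κ` this is impossible since `C` sits inside an `E_κ`-class met by `dom q`, and for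
`κ ≤ θ` the class `C` contains a whole `E_κ`-class met by `dom p`, so `C` grows from `p`
to `r`. Symmetrically every class growing from `r` to `q ∪ r` grows from `p` to `q`, which
bounds the number of growing classes. Everything else is closure of `< ∂_θ` under unions of
two sets.
-/

lemma mem_cls_self (κ : Cardinal.{0}) (x : Ordinal.{0}) : x ∈ Cls κ x := rfl

lemma cls_eq_of_mem {κ : Cardinal.{0}} {x y : Ordinal.{0}} (h : y ∈ Cls κ x) :
    Cls κ y = Cls κ x := by
  ext z
  simp only [Cls, Set.mem_ofPred_eq, show y + κ.ord = x + κ.ord from h]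

lemma cls_subset_cls {θ κ : Cardinal.{0}} (h : θ ≤ κ) (x : Ordinal.{0}) :
    Cls θ x ⊆ Cls κ x := by
  intro y (hy : y + θ.ord = x + θ.ord)
  show y + κ.ord = x + κ.ord
  rw [← Ordinal.add_sub_cancel_of_le (ord_le_ord.2 h), ← add_assoc, ← add_assoc, hy]

lemma mk_union_lt {α : Type*} {s t : Set α} {c : Cardinal} (hc : ℵ₀ ≤ c)
    (hs : #s < c) (ht : #t < c) : #↥(s ∪ t) < c :=
  (mk_union_le s t).trans_lt (add_lt_of_lt hc hs ht)

section UnionQ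

variable {q r : Ordinal.{0} → Option Bool} {i : Ordinal.{0}}

lemma unionQ_apply_of_ne_none (h : q i ≠ none) : UnionQ q r i = q i := by
  obtain ⟨b, hb⟩ := Option.ne_none_iff_exists'.1 h
  simp [UnionQ, hb]

lemma unionQ_apply_of_eq_none (h : q i = none) : UnionQ q r i = r i := by
  simp [UnionQ, h]

lemma unionQ_apply_right (hqr : ∀ i, q i ≠ none → r i ≠ none → q i = r i)
    (h : r i ≠ none) : UnionQ q r i = r i := by
  by_cases hq : q i = none
  · exact unionQ_apply_of_eq_none hq
  · rw [unionQ_apply_of_ne_none hq, hqr i hq h]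

lemma dom_unionQ : Dom (UnionQ q r) = Dom q ∪ Dom r := by
  ext i
  simp only [Dom, Set.mem_ofPred_eq, Set.mem_union, UnionQ]
  cases q i <;> simp

lemma dom_subset_unionQ_left : Dom q ⊆ Dom (UnionQ q r) :=
  dom_unionQ ▸ Set.subset_union_left

lemma dom_subset_unionQ_right : Dom r ⊆ Dom (UnionQ q r) :=
  dom_unionQ ▸ Set.subset_union_right

end UnionQ

section Grows

variable {θ : Cardinal.{0}} {p q s : Ordinal.{0} → Option Bool} {C : Set Ordinal.{0}}

lemma Grows.exists_mem_dom_diff (hs : Dom q ⊆ Dom s) (h : Grows θ q s C) :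
    ∃ x ∈ Dom q, C = Cls θ x ∧ ∃ y ∈ C, y ∈ Dom s ∧ y ∉ Dom q := by
  obtain ⟨⟨i, rfl⟩, ⟨x, hxC, hx⟩, hne⟩ := h
  obtain ⟨y, ⟨hyC, hys⟩, hyq⟩ :=
    Set.exists_of_ssubset (ssubset_of_subset_of_ne (Set.inter_subset_inter_right _ hs) hne)
  exact ⟨x, hx, (cls_eq_of_mem hxC).symm, y, hyC, hys, fun h => hyq ⟨hyC, h⟩⟩

lemma grows_of_mem_of_not_mem {x y : Ordinal.{0}} (hp : (Cls θ x ∩ Dom p).Nonempty)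
    (hyC : y ∈ Cls θ x) (hys : y ∈ Dom s) (hyp : y ∉ Dom p) : Grows θ p s (Cls θ x) := by
  refine ⟨⟨x, rfl⟩, hp, fun heq => hyp ?_⟩
  have hy : y ∈ Cls θ x ∩ Dom s := ⟨hyC, hys⟩
  rw [← heq] at hy
  exact hy.2

lemma Grows.of_unionQ {q r t : Ordinal.{0} → Option Bool} (hq : Dom q ⊆ Dom t)
    (hr : Dom r ⊆ Dom t) (h : Grows θ (UnionQ q r) t C) : Grows θ q t C ∨ Grows θ r t C := by
  obtain ⟨hC, ⟨w, hwC, hw⟩, hne⟩ := h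
  have hUt : Dom (UnionQ q r) ⊆ Dom t := dom_unionQ ▸ Set.union_subset hq hr
  have stable : ∀ s, Dom s ⊆ Dom (UnionQ q r) → C ∩ Dom s ≠ C ∩ Dom t := fun s hs heq =>
    hne ((Set.inter_subset_inter_right C hUt).antisymm
      (heq ▸ Set.inter_subset_inter_right C hs))
  rw [dom_unionQ] at hw
  rcases hw with hwq | hwr
  · exact .inl ⟨hC, ⟨w, hwC, hwq⟩, stable q dom_subset_unionQ_left⟩
  · exact .inr ⟨hC, ⟨w, hwC, hwr⟩, stable r dom_subset_unionQ_right⟩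

end Grows

section Order

variable {μ : Cardinal.{0}} {Θ : Set Cardinal.{0}} {d : Cardinal.{0} → Cardinal.{0}}
  {p q r t : Ordinal.{0} → Option Bool}

lemma QLe.dom_subset (h : QLe Θ d p q) : Dom p ⊆ Dom q := fun i hi => by
  simpa [Dom, h.1 i hi] using hi

lemma QLe.of_grows_imp {a b : Ordinal.{0} → Option Bool}
    (hext : ∀ i, p i ≠ none → q i = p i)
    (hgrows : ∀ θ C, Grows θ p q C → Grows θ a b C) (hab : QLe Θ d a b) : QLe Θ d p q :=
  ⟨hext, fun θ hθ => (mk_le_mk_of_subset (hgrows θ)).trans_lt (hab.2 θ hθ)⟩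

lemma InQ.unionQ (hd : ∀ θ ∈ Θ, ℵ₀ ≤ d θ) (hq : InQ μ Θ d q) (hr : InQ μ Θ d r) :
    InQ μ Θ d (UnionQ q r) := by
  refine ⟨fun i hi => ?_, fun θ hθ i hi => ?_⟩
  · by_cases hqi : q i = none
    · rw [unionQ_apply_of_eq_none hqi] at hi
      exact hr.1 i hi
    · exact hq.1 i hqi
  · rw [dom_unionQ, Set.inter_union_distrib_left]
    exact mk_union_lt (aleph0_le_lift.2 (hd θ hθ)) (hq.2 θ hθ i hi) (hr.2 θ hθ i hi)

lemma QLe.unionQ_le (hd : ∀ θ ∈ Θ, ℵ₀ ≤ d θ) (hqt : QLe Θ d q t) (hrt : QLe Θ d r t) :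
    QLe Θ d (UnionQ q r) t := by
  refine ⟨fun i hi => ?_, fun θ hθ => ?_⟩
  · by_cases hqi : q i = none
    · rw [unionQ_apply_of_eq_none hqi] at hi ⊢
      exact hrt.1 i hi
    · rw [unionQ_apply_of_ne_none hqi]
      exact hqt.1 i hqi
  · exact (mk_le_mk_of_subset fun C => Grows.of_unionQ hqt.dom_subset hrt.dom_subset).trans_lt
      (mk_union_lt (aleph0_le_lift.2 (hd θ hθ)) (hqt.2 θ hθ) (hrt.2 θ hθ))

end Order

section ApPr

variable {Θ : Set Cardinal.{0}} {d : Cardinal.{0} → Cardinal.{0}} {θ κ : Cardinal.{0}}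
  {p q r : Ordinal.{0} → Option Bool} {x y : Ordinal.{0}} {C : Set Ordinal.{0}}

lemma QLeAp.cls_inter_dom_nonempty (h : QLeAp Θ d κ p q) (hx : x ∈ Dom q) :
    (Cls κ x ∩ Dom p).Nonempty :=
  (h.2 x).2 ⟨x, mem_cls_self κ x, hx⟩

lemma QLePr.cls_inter_dom_eq (h : QLePr Θ d κ p r) (hx : (Cls κ x ∩ Dom p).Nonempty) :
    Cls κ x ∩ Dom r = Cls κ x ∩ Dom p := by
  by_contra hne
  exact h.2 _ ⟨⟨x, rfl⟩, hx, Ne.symm hne⟩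

lemma mem_dom_of_le_of_mem_cls (hap : QLeAp Θ d κ p q) (hpr : QLePr Θ d κ p r)
    (hθκ : θ ≤ κ) (hx : x ∈ Dom q) (hyx : y ∈ Cls θ x) (hy : y ∈ Dom r) : y ∈ Dom p := by
  have hy' : y ∈ Cls κ x ∩ Dom r := ⟨cls_subset_cls hθκ x hyx, hy⟩
  rw [hpr.cls_inter_dom_eq (hap.cls_inter_dom_nonempty hx)] at hy'
  exact hy'.2

lemma cls_inter_dom_nonempty_of_mem (hap : QLeAp Θ d κ p q) (hpr : QLePr Θ d κ p r)
    (hx : x ∈ Dom q) (hyx : y ∈ Cls θ x) (hy : y ∈ Dom r) : (Cls θ x ∩ Dom p).Nonempty := by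
  rcases le_total θ κ with hθκ | hκθ
  · exact ⟨y, hyx, mem_dom_of_le_of_mem_cls hap hpr hθκ hx hyx hy⟩
  · obtain ⟨z, hzx, hzp⟩ := hap.cls_inter_dom_nonempty hx
    exact ⟨z, cls_subset_cls hκθ x hzx, hzp⟩

lemma eq_of_ne_none_of_ne_none (hap : QLeAp Θ d κ p q) (hpr : QLePr Θ d κ p r)
    (i : Ordinal.{0}) (hq : q i ≠ none) (hr : r i ≠ none) : q i = r i := by
  have hp : p i ≠ none := mem_dom_of_le_of_mem_cls hap hpr le_rfl hq (mem_cls_self κ i) hr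
  rw [hap.1.1 i hp, hpr.1.1 i hp]

lemma grows_of_grows_unionQ_left (hap : QLeAp Θ d κ p q) (hpr : QLePr Θ d κ p r)
    (h : Grows θ q (UnionQ q r) C) : Grows θ p r C := by
  obtain ⟨x, hx, rfl, y, hyC, hyU, hyq⟩ := h.exists_mem_dom_diff dom_subset_unionQ_left
  have hyr : y ∈ Dom r := (dom_unionQ ▸ hyU : y ∈ Dom q ∪ Dom r).resolve_left hyq
  exact grows_of_mem_of_not_mem (cls_inter_dom_nonempty_of_mem hap hpr hx hyC hyr) hyC hyr
    fun hyp => hyq (hap.1.dom_subset hyp)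

lemma grows_of_grows_unionQ_right (hap : QLeAp Θ d κ p q) (hpr : QLePr Θ d κ p r)
    (h : Grows θ r (UnionQ q r) C) : Grows θ p q C := by
  obtain ⟨w, hw, rfl, x, hxC, hxU, hxr⟩ := h.exists_mem_dom_diff dom_subset_unionQ_right
  have hxq : x ∈ Dom q := (dom_unionQ ▸ hxU : x ∈ Dom q ∪ Dom r).resolve_right hxr
  have hC : Cls θ x = Cls θ w := cls_eq_of_mem hxC
  rw [← hC]
  exact grows_of_mem_of_not_mem
    (cls_inter_dom_nonempty_of_mem hap hpr hxq (hC ▸ mem_cls_self θ w) hw)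
    (mem_cls_self θ x) hxq fun hxp => hxr (hpr.1.dom_subset hxp)

lemma not_grows_unionQ_left (hap : QLeAp Θ d κ p q) (hpr : QLePr Θ d κ p r) :
    ¬ Grows κ q (UnionQ q r) C := by
  intro h
  obtain ⟨x, hx, rfl, y, hyC, hyU, hyq⟩ := h.exists_mem_dom_diff dom_subset_unionQ_left
  have hyr : y ∈ Dom r := (dom_unionQ ▸ hyU : y ∈ Dom q ∪ Dom r).resolve_left hyq
  exact hyq (hap.1.dom_subset (mem_dom_of_le_of_mem_cls hap hpr le_rfl hx hyC hyr))

lemma cls_inter_dom_nonempty_of_unionQ (hap : QLeAp Θ d κ p q) (hpr : QLePr Θ d κ p r)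
    (h : (Cls κ x ∩ Dom (UnionQ q r)).Nonempty) : (Cls κ x ∩ Dom r).Nonempty := by
  obtain ⟨w, hwC, hw⟩ := h
  rw [dom_unionQ] at hw
  rcases hw with hwq | hwr
  · obtain ⟨z, hzw, hzp⟩ := hap.cls_inter_dom_nonempty hwq
    exact ⟨z, cls_eq_of_mem hwC ▸ hzw, hpr.1.dom_subset hzp⟩
  · exact ⟨w, hwC, hwr⟩

end ApPr

theorem ap_pr_union_general
    (μ : Cardinal.{0}) (Θ : Set Cardinal.{0}) (d : Cardinal.{0} → Cardinal.{0})
    (hd : ∀ θ ∈ Θ, (d θ).IsRegular ∧ d θ ≤ θ)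
    (κ : Cardinal.{0})
    (p q r : Ordinal.{0} → Option Bool)
    (hq : InQ μ Θ d q) (hr : InQ μ Θ d r)
    (hap : QLeAp Θ d κ p q) (hpr : QLePr Θ d κ p r) :
    (∀ i, q i ≠ none → r i ≠ none → q i = r i) ∧
    InQ μ Θ d (UnionQ q r) ∧
    QLe Θ d q (UnionQ q r) ∧ QLe Θ d r (UnionQ q r) ∧
    (∀ t, InQ μ Θ d t → QLe Θ d q t → QLe Θ d r t → QLe Θ d (UnionQ q r) t) ∧
    QLePr Θ d κ q (UnionQ q r) ∧ QLeAp Θ d κ r (UnionQ q r) := by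
  have hd' : ∀ θ ∈ Θ, ℵ₀ ≤ d θ := fun θ hθ => (hd θ hθ).1.aleph0_le
  have compat := eq_of_ne_none_of_ne_none hap hpr
  have hqU : QLe Θ d q (UnionQ q r) := QLe.of_grows_imp (fun _ => unionQ_apply_of_ne_none)
    (fun _ _ => grows_of_grows_unionQ_left hap hpr) hpr.1
  have hrU : QLe Θ d r (UnionQ q r) := QLe.of_grows_imp (fun _ => unionQ_apply_right compat)
    (fun _ _ => grows_of_grows_unionQ_right hap hpr) hap.1
  refine ⟨compat, hq.unionQ hd' hr, hqU, hrU, fun t _ hqt hrt => hqt.unionQ_le hd' hrt,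
    ⟨hqU, fun _ => not_grows_unionQ_left hap hpr⟩, ⟨hrU, fun x => ⟨?_, ?_⟩⟩⟩
  · exact fun h => h.mono (Set.inter_subset_inter_right _ dom_subset_unionQ_right)
  · exact cls_inter_dom_nonempty_of_unionQ hap hpr

/-- If `κ ∈ Θ`, `p ≤^ap_κ q` and `p ≤^pr_κ r`, then `q ∪ r` is a
well-defined function in `Q`, a least upper bound of `q` and `r`, and
moreover `q ≤^pr_κ (q ∪ r)` and `r ≤^ap_κ (q ∪ r)`. -/
theorem ap_pr_union
    (l μ : Cardinal.{0}) (Θ : Set Cardinal.{0}) (d : Cardinal.{0} → Cardinal.{0})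
    (hl : l.IsRegular) (hμ : μ.IsRegular) (hlμ : l < μ)
    (hΘ : Θ ⊆ {c : Cardinal.{0} | c.IsRegular ∧ l ≤ c ∧ c ≤ μ})
    (hlΘ : l ∈ Θ) (hμΘ : μ ∈ Θ)
    (hd : ∀ θ ∈ Θ, (d θ).IsRegular ∧ d θ ≤ θ)
    (κ : Cardinal.{0}) (hκΘ : κ ∈ Θ)
    (p q r : Ordinal.{0} → Option Bool)
    (hp : InQ μ Θ d p) (hq : InQ μ Θ d q) (hr : InQ μ Θ d r)
    (hap : QLeAp Θ d κ p q) (hpr : QLePr Θ d κ p r) :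
    (∀ i, q i ≠ none → r i ≠ none → q i = r i) ∧
    InQ μ Θ d (UnionQ q r) ∧
    QLe Θ d q (UnionQ q r) ∧ QLe Θ d r (UnionQ q r) ∧
    (∀ t, InQ μ Θ d t → QLe Θ d q t → QLe Θ d r t → QLe Θ d (UnionQ q r) t) ∧
    QLePr Θ d κ q (UnionQ q r) ∧ QLeAp Θ d κ r (UnionQ q r) :=
  ap_pr_union_general μ Θ d hd κ p q r hq hr hap hpr
end
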